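/- arXiv:1509.06541 — 2 statements merged into one kernel-verified Lean document; each statement's English description precedes it below -/
import Mathlib

section
/- For simple shear with amount γ, the matrix logarithm of the stretch U satisfies log U = (1/√(γ²+4))·[[−γ·log λ₁, 2·log λ₁, 0],[2·log λ₁, γ·log λ₁, 0],[0,0,0]], where λ₁ = (√(γ²+4)+γ)/2. -/
open Matrix Real

/-!
Put `λ = λ₁`. Since `λ⁻¹ = (√(γ²+4) - γ)/2`, we have `γ = λ - λ⁻¹` and `√(γ²+4) = λ + λ⁻¹`, and
both `U` and the proposed `L` are diagonalised by the same basis `(1, λ, 0)`, `(1, -λ⁻¹, 0)`,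
`(0, 0, 1)`: `U` with eigenvalues `λ, λ⁻¹, 1` and `L` with `log λ, -log λ, 0`. The matrix
exponential commutes with conjugation, so `exp L = U`.
-/

theorem Matrix.exp_conj_diagonal {n : Type*} [Fintype n] [DecidableEq n]
    (C : Matrix n n ℝ) (hC : IsUnit C) (d : n → ℝ) :
    NormedSpace.exp (C * diagonal d * C⁻¹) = C * diagonal (fun i => Real.exp (d i)) * C⁻¹ := by
  rw [exp_conj C _ hC, exp_diagonal, Pi.exp_def, ← Real.exp_eq_exp_ℝ]

lemma inv_half_sqrt_sq_add_four_add (γ : ℝ) :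
    ((√(γ ^ 2 + 4) + γ) / 2)⁻¹ = (√(γ ^ 2 + 4) - γ) / 2 := by
  have hs : √(γ ^ 2 + 4) ^ 2 = γ ^ 2 + 4 := sq_sqrt (by positivity)
  apply inv_eq_of_mul_eq_one_right
  nlinarith

lemma half_sqrt_sq_add_four_add_pos (γ : ℝ) : 0 < (√(γ ^ 2 + 4) + γ) / 2 := by
  have : |γ| < √(γ ^ 2 + 4) := by
    rw [← sqrt_sq_eq_abs]; exact sqrt_lt_sqrt (sq_nonneg γ) (by linarith)
  linarith [neg_abs_le γ]

noncomputable def stretchEigenbasis (a : ℝ) : Matrix (Fin 3) (Fin 3) ℝ :=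
  !![1, 1, 0; a, -a⁻¹, 0; 0, 0, 1]

lemma stretchEigenbasis_mul_eq_one {a : ℝ} (ha : 0 < a) :
    stretchEigenbasis a * ((a + a⁻¹)⁻¹ • !![a⁻¹, 1, 0; a, -1, 0; 0, 0, a + a⁻¹]) = 1 := by
  have : a + a⁻¹ ≠ 0 := by positivity
  ext i j
  fin_cases i <;> fin_cases j <;>
    simp [stretchEigenbasis, mul_apply, Fin.sum_univ_three, one_apply] <;> field_simp <;> ring

lemma stretchEigenbasis_inv {a : ℝ} (ha : 0 < a) :
    (stretchEigenbasis a)⁻¹ = (a + a⁻¹)⁻¹ • !![a⁻¹, 1, 0; a, -1, 0; 0, 0, a + a⁻¹] :=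
  inv_eq_right_inv (stretchEigenbasis_mul_eq_one ha)

lemma isUnit_stretchEigenbasis {a : ℝ} (ha : 0 < a) : IsUnit (stretchEigenbasis a) :=
  (isUnit_iff_isUnit_det _).2 (isUnit_det_of_right_inverse (stretchEigenbasis_mul_eq_one ha))

lemma stretchEigenbasis_conj_diagonal {a : ℝ} (ha : 0 < a) (x y z : ℝ) :
    stretchEigenbasis a * diagonal ![x, y, z] * (stretchEigenbasis a)⁻¹ =
      (a + a⁻¹)⁻¹ • !![a⁻¹ * x + a * y, x - y, 0; x - y, a * x + a⁻¹ * y, 0; 0, 0, (a + a⁻¹) * z] := by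
  rw [stretchEigenbasis_inv ha]
  ext i j
  fin_cases i <;> fin_cases j <;>
    simp [stretchEigenbasis, mul_apply, Fin.sum_univ_three, vecMul_diagonal] <;> field_simp <;> ring

/-- For simple shear with amount γ, the matrix logarithm of the stretch `U`
(the unique symmetric `L` with `exp L = U`) is
`(1/√(γ²+4)) • [[−γ log λ₁, 2 log λ₁, 0],[2 log λ₁, γ log λ₁, 0],[0,0,0]]`,
where `λ₁ = (√(γ²+4)+γ)/2`. -/
theorem simple_shear_log_stretch (γ : ℝ)
    (U L : Matrix (Fin 3) (Fin 3) ℝ)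
    (hU : U = (1 / Real.sqrt (γ ^ 2 + 4)) •
      !![2, γ, 0; γ, γ ^ 2 + 2, 0; 0, 0, Real.sqrt (γ ^ 2 + 4)])
    (lam₁ : ℝ) (hlam : lam₁ = (Real.sqrt (γ ^ 2 + 4) + γ) / 2)
    (hL : L = (1 / Real.sqrt (γ ^ 2 + 4)) •
      !![-γ * Real.log lam₁, 2 * Real.log lam₁, 0;
         2 * Real.log lam₁, γ * Real.log lam₁, 0; 0, 0, 0]) :
    Lᵀ = L ∧ NormedSpace.exp L = U := by
  have hpos : 0 < lam₁ := hlam ▸ half_sqrt_sq_add_four_add_pos γ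
  have hs : √(γ ^ 2 + 4) = lam₁ + lam₁⁻¹ := by
    rw [hlam, inv_half_sqrt_sq_add_four_add]; ring
  have hγ : γ = lam₁ - lam₁⁻¹ := by
    rw [hlam, inv_half_sqrt_sq_add_four_add]; ring
  have hL_conj : L = stretchEigenbasis lam₁ * diagonal ![log lam₁, -log lam₁, 0] *
      (stretchEigenbasis lam₁)⁻¹ := by
    rw [stretchEigenbasis_conj_diagonal hpos, hL, hs, one_div]
    congr 1
    ext i j
    fin_cases i <;> fin_cases j <;> simp [hγ] <;> ring
  have hU_conj : U = stretchEigenbasis lam₁ * diagonal ![lam₁, lam₁⁻¹, 1] *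
      (stretchEigenbasis lam₁)⁻¹ := by
    rw [stretchEigenbasis_conj_diagonal hpos, hU, hs, one_div]
    congr 1
    ext i j
    fin_cases i <;> fin_cases j <;> simp [hγ] <;> field_simp <;> ring
  refine ⟨?_, ?_⟩
  · rw [hL, transpose_smul]
    congr 1
    ext i j
    fin_cases i <;> fin_cases j <;> rfl
  · rw [hL_conj, hU_conj, exp_conj_diagonal _ (isUnit_stretchEigenbasis hpos)]
    congr
    ext i
    fin_cases i <;> simp [exp_log hpos, Real.exp_neg]
end

section
/- The derivative of the shear stress τ₁₂(γ) = 4μ·e^{2k h(γ)²}·h(γ)/√(γ²+4) at γ = 0 equals μ, i.e. the infinitesimal shear modulus of the exponentiated Hencky model is μ. -/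
/-!
Since `h(γ) = arsinh(γ/2)`, we have `h(0) = 0` and `h'(0) = 1/2`. Writing
`τ = 4μ · h · g` with `g(γ) = e^{2k h(γ)²}/√(γ²+4)`, the vanishing of `h` at `0` means the
product rule there needs only the continuity of `g`, giving `τ'(0) = 4μ · (1/2) · g(0) = μ`.
-/

open Real

theorem HasDerivAt.mul_continuousAt_of_eq_zero {𝕜 : Type*} [NontriviallyNormedField 𝕜]
    {f g : 𝕜 → 𝕜} {f' x : 𝕜} (hf : HasDerivAt f f' x) (hfx : f x = 0)
    (hg : ContinuousAt g x) : HasDerivAt (fun y => f y * g y) (f' * g x) x := by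
  rw [hasDerivAt_iff_tendsto_slope] at hf ⊢
  have hslope : slope (fun y => f y * g y) x = fun y => slope f x y * g y := by
    funext y
    simp only [slope_def_field, hfx, zero_mul, sub_zero]
    ring
  rw [hslope]
  exact hf.mul (hg.tendsto.mono_left nhdsWithin_le_nhds)

theorem Real.log_sqrt_sq_add_four_add_div_two (x : ℝ) :
    log ((√(x ^ 2 + 4) + x) / 2) = arsinh (x / 2) := by
  have hsqrt : √(1 + (x / 2) ^ 2) = √(x ^ 2 + 4) / 2 := by
    rw [show 1 + (x / 2) ^ 2 = (x ^ 2 + 4) / 2 ^ 2 by ring, sqrt_div' _ (by positivity),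
      sqrt_sq zero_le_two]
  rw [arsinh, hsqrt]
  ring_nf

theorem shear_stress_deriv_at_zero_general (μ k : ℝ)
    (h τ : ℝ → ℝ)
    (hdef : ∀ γ : ℝ, h γ = Real.log ((Real.sqrt (γ ^ 2 + 4) + γ) / 2))
    (hτ : ∀ γ : ℝ, τ γ = 4 * μ * Real.exp (2 * k * (h γ) ^ 2) * h γ / Real.sqrt (γ ^ 2 + 4)) :
    HasDerivAt τ μ 0 := by
  have h_eq : h = fun γ => arsinh (γ / 2) :=
    funext fun γ => by rw [hdef, log_sqrt_sq_add_four_add_div_two]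
  have h_deriv : HasDerivAt h (1 / 2) 0 := by
    rw [h_eq]
    simpa using ((hasDerivAt_id (0 : ℝ)).div_const 2).arsinh
  have h_zero : h 0 = 0 := by simp [h_eq]
  have h_cont : Continuous h := h_eq ▸ continuous_arsinh.comp (continuous_id.div_const 2)
  have hg : ContinuousAt (fun γ => exp (2 * k * h γ ^ 2) / √(γ ^ 2 + 4)) 0 :=
    ContinuousAt.div (by fun_prop) (by fun_prop) (by norm_num)
  have hτ_eq : τ = fun γ => 4 * μ * h γ * (exp (2 * k * h γ ^ 2) / √(γ ^ 2 + 4)) :=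
    funext fun γ => by rw [hτ]; ring
  rw [hτ_eq]
  refine ((h_deriv.const_mul (4 * μ)).mul_continuousAt_of_eq_zero (by simp [h_zero]) hg).congr_deriv ?_
  have h_sqrt_four : √(4 : ℝ) = 2 := by
    rw [show (4 : ℝ) = 2 ^ 2 by norm_num, sqrt_sq zero_le_two]
  norm_num [h_zero, h_sqrt_four]
  ring

/-- The derivative at `γ = 0` of the shear stress
`τ₁₂(γ) = 4μ e^{2k h(γ)²} h(γ)/√(γ²+4)` equals μ: the infinitesimal shear modulus
of the exponentiated Hencky model is μ. -/
theorem shear_stress_deriv_at_zero (μ k : ℝ) (hμ : 0 < μ)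
    (h τ : ℝ → ℝ)
    (hdef : ∀ γ : ℝ, h γ = Real.log ((Real.sqrt (γ ^ 2 + 4) + γ) / 2))
    (hτ : ∀ γ : ℝ, τ γ = 4 * μ * Real.exp (2 * k * (h γ) ^ 2) * h γ / Real.sqrt (γ ^ 2 + 4)) :
    HasDerivAt τ μ 0 :=
  shear_stress_deriv_at_zero_general μ k h τ hdef hτ
end
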